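/- Let n ≥ 3 and i, j ∈ ℤ/nℤ. Then the 4-tuple of reflections (s_i, s_i, s_j, s_j) in D_n is Hurwitz equivalent to (s_j, s_j, s_i, s_i). -/
import Mathlib


/-- One elementary braid (Hurwitz) move on a tuple of elements of a group `G`,
encoded as a list: `σᵢ` replaces the adjacent pair `(a, b)` occurring at some
position by `(a * b * a⁻¹, a)`. -/
inductive BraidStep {G : Type*} [Group G] : List G → List G → Prop
  | head (a b : G) (t : List G) : BraidStep (a :: b :: t) (a * b * a⁻¹ :: a :: t)
  | tail (a : G) {l₁ l₂ : List G} : BraidStep l₁ l₂ → BraidStep (a :: l₁) (a :: l₂)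

/-- Hurwitz (braid) equivalence: the equivalence relation generated by
elementary braid moves (so finitely many moves and their inverses). -/
def HurwitzEquiv {G : Type*} [Group G] : List G → List G → Prop :=
  Relation.EqvGen BraidStep

/-- Braid-automorphism equivalence: `v` and `w` differ by a braid move sequence
together with the diagonal action of a group automorphism. -/
def BAEquiv {G : Type*} [Group G] (v w : List G) : Prop :=
  ∃ φ : G ≃* G, HurwitzEquiv (v.map ⇑φ) w

/-- A `G`-Hurwitz vector (genus 0): all entries nontrivial, the entries
generate `G`, and the product of the entries is `1`. -/
def IsHurwitzVector {G : Type*} [Group G] (v : List G) : Prop :=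
  (∀ c ∈ v, c ≠ 1) ∧ Subgroup.closure {g | g ∈ v} = ⊤ ∧ v.prod = 1

/-- The reflection `s i = x^i * y` of the dihedral group `D_n`,
where `x = DihedralGroup.r 1` and `y = DihedralGroup.sr 0`. -/
def sD {n : ℕ} (i : ZMod n) : DihedralGroup n :=
  DihedralGroup.r i * DihedralGroup.sr 0

/-- Being a reflection in the dihedral group. -/
def IsReflection {n : ℕ} (g : DihedralGroup n) : Prop :=
  ∃ i : ZMod n, g = DihedralGroup.sr i

/-- `(s_i, s_i, s_j, s_j)` is Hurwitz equivalent to `(s_j, s_j, s_i, s_i)`. -/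
theorem pair_swap (n : ℕ) (hn : 3 ≤ n) (i j : ZMod n) :
    HurwitzEquiv [sD i, sD i, sD j, sD j] [sD j, sD j, sD i, sD i] := by
  set a := sD i with hai
  set b := sD j with hbj
  have ha : a * a = 1 := by
    show (DihedralGroup.r i * DihedralGroup.sr 0) * (DihedralGroup.r i * DihedralGroup.sr 0) = 1
    rw [DihedralGroup.r_mul_sr, DihedralGroup.sr_mul_self]
  have hainv : a⁻¹ = a := by
    rw [inv_eq_iff_mul_eq_one, ha]
  have key : a * (a * b * a⁻¹) * a⁻¹ = b := by
    rw [hainv, show a * (a * b * a) * a = (a * a) * b * (a * a) by group, ha, one_mul, mul_one]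
  have s1 : BraidStep [a, a, b, b] [a, a * b * a⁻¹, a, b] :=
    BraidStep.tail a (BraidStep.head a b [b])
  have s2 : BraidStep [a, a * b * a⁻¹, a, b] [b, a, a, b] := by
    have := BraidStep.head a (a * b * a⁻¹) [a, b]
    rwa [key] at this
  have s3 : BraidStep [b, a, a, b] [b, a, a * b * a⁻¹, a] :=
    BraidStep.tail b (BraidStep.tail a (BraidStep.head a b []))
  have s4 : BraidStep [b, a, a * b * a⁻¹, a] [b, b, a, a] := by
    have := BraidStep.tail b (BraidStep.head a (a * b * a⁻¹) [a])
    rwa [key] at this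
  exact .trans _ _ _ (.rel _ _ s1) (.trans _ _ _ (.rel _ _ s2)
    (.trans _ _ _ (.rel _ _ s3) (.rel _ _ s4)))
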